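/- Let p be a prime, ℓ a positive integer, and k ≥ 2ℓ. Let α = (a_1,…,a_k) ∈ (F_p ∪ {⋆})^k be a pattern with a_ℓ ≠ 0 and a_{ℓ+1} = ⋯ = a_k = 0. Then f_α(p, n) = Θ(n^{1/ℓ}). Moreover, if a_ℓ = 1 or a_ℓ = ⋆, then f_α(p, n) ~ (ℓ!·n)^{1/ℓ}. -/

import Mathlib

open Filter

/-- A family `F` of subsets of `[n]` (modeled as `Fin n`) is `α`-intersecting modulo `p` for a
pattern `α ∈ (F_p ∪ {⋆})^k` (a `⋆` entry is modeled as `none`, an entry `a ∈ F_p` as `some a`)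
if for each `j ∈ [k]`, any `j` pairwise distinct members of `F` have an intersection whose
cardinality is `≡ a_j (mod p)` when `a_j ∈ F_p`, and is `≢ 0 (mod p)` when `a_j = ⋆`. -/
def IsIntersectingStar (p k n : ℕ) (α : Fin k → Option (ZMod p))
    (F : Finset (Finset (Fin n))) : Prop :=
  ∀ (j : Fin k) (S : Finset (Finset (Fin n))), S ⊆ F → S.card = j.1 + 1 →
    match α j with
    | some a => ((S.inf id).card : ZMod p) = a
    | none => ((S.inf id).card : ZMod p) ≠ 0

/-- `fMaxStar p k n α` is the maximum size of an `α`-intersecting (mod `p`) family of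
subsets of `[n]`, for a pattern `α ∈ (F_p ∪ {⋆})^k`. -/
noncomputable def fMaxStar (p k n : ℕ) (α : Fin k → Option (ZMod p)) : ℕ :=
  sSup {m | ∃ F : Finset (Finset (Fin n)), IsIntersectingStar p k n α F ∧ F.card = m}

/-! Upper bound: for an `α`-intersecting family `F`, the indicator vectors of the intersections
`⋂ L` over the `l`-subsets `L ⊆ F` are orthogonal over `𝔽_p` with non-zero squares, since
`⋂ L ∩ ⋂ M = ⋂ (L ∪ M)` and `l < |L ∪ M| ≤ 2l` for `L ≠ M`; so `C(|F|, l) ≤ n`.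

Lower bound: take a ground set with `β_{|T|}` copies of every `T ⊆ [m]` with `|T| ≤ l`, and let
`F_i` be the copies of the `T ∋ i`. The sets indexed by `S` meet in the copies of the supersets of
`S`, of which there are `∑_u C(m - |S|, u) β_{|S| + u}`. This system is triangular in `β`, so
residues `β_t ∈ [0, p)` realise the pattern (with `⋆` read as `1`) and vanish above `l`. The ground
set then has `β_l C(m, l) + O(m^(l-1))` points, and `β_l = 1` when `a_l ∈ {1, ⋆}`.

Hence `(l! n / β_l)^(1/l) - O(1) ≤ f_α(p, n) ≤ (l! n)^(1/l) + l`. -/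

open Finset Topology

theorem dotProduct_indicator {ι K : Type*} [Fintype ι] [DecidableEq ι] [Semiring K]
    (A B : Finset ι) :
    dotProduct (fun x => if x ∈ A then (1 : K) else 0) (fun x => if x ∈ B then 1 else 0) =
      #(A ∩ B) := by
  simp [dotProduct, inter_comm]

theorem choose_card_le_of_inf_card {ι K : Type*} [Fintype ι] [DecidableEq ι] [Field K]
    (F : Finset (Finset ι)) (l : ℕ)
    (hdiag : ∀ S ⊆ F, #S = l → (#(S.inf id) : K) ≠ 0)
    (hoff : ∀ S ⊆ F, l < #S → #S ≤ 2 * l → (#(S.inf id) : K) = 0) :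
    (#F).choose l ≤ Fintype.card ι := by
  let v : F.powersetCard l → ι → K := fun L x => if x ∈ L.1.inf id then 1 else 0
  have hv : ∀ L M, dotProductBilin K K (v L) (v M) = #((L.1 ∪ M.1).inf id) := by
    intro L M
    simp only [dotProductBilin_apply_apply, v, dotProduct_indicator, inf_union]
    rfl
  have hind : LinearIndependent K v := by
    refine LinearMap.linearIndependent_of_isOrthoᵢ (B := dotProductBilin K K) ?_ ?_
    · intro L M hLM
      obtain ⟨hL, hLc⟩ := mem_powersetCard.mp L.2
      obtain ⟨hM, hMc⟩ := mem_powersetCard.mp M.2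
      have hssub : L.1 ⊂ L.1 ∪ M.1 := ssubset_of_subset_of_ne subset_union_left fun h =>
        hLM (Subtype.ext (eq_of_subset_of_card_le (h ▸ subset_union_right) (by omega)).symm)
      have hlt := card_lt_card hssub
      have hle := card_union_le L.1 M.1
      show dotProductBilin K K (v L) (v M) = 0
      rw [hv]
      exact hoff _ (union_subset hL hM) (by omega) (by omega)
    · intro L
      obtain ⟨hL, hLc⟩ := mem_powersetCard.mp L.2
      rw [hv, union_self]
      exact hdiag _ hL hLc
  have := hind.fintype_card_le_finrank
  rwa [Fintype.card_coe, card_powersetCard, Module.finrank_fintype_fun_eq_card] at this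

section BlockWeight

variable {R : Type*} [CommRing R] (m l : ℕ) (r : ℕ → R)

def blockWeight : ℕ → R
  | t => if t ≤ l then
      r t - ∑ u ∈ (range (l - t)).attach, ((m - t).choose (u + 1) : R) * blockWeight (t + u + 1)
    else 0
termination_by t => l - t
decreasing_by have := mem_range.mp u.2; omega

theorem blockWeight_of_lt {t : ℕ} (ht : l < t) : blockWeight m l r t = 0 := by
  rw [blockWeight, if_neg (by omega)]

theorem blockWeight_self : blockWeight m l r l = r l := by
  rw [blockWeight, if_pos le_rfl, sub_eq_self]
  exact sum_eq_zero fun u _ => absurd (mem_range.mp u.2) (by omega)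

theorem sum_choose_mul_blockWeight {j N : ℕ} (hj : j ≤ l) (hN : l - j ≤ N) :
    ∑ u ∈ range (N + 1), ((m - j).choose u : R) * blockWeight m l r (j + u) = r j := by
  have hvanish : ∀ u ∈ range (N + 1), u ∉ range (l - j + 1) →
      ((m - j).choose u : R) * blockWeight m l r (j + u) = 0 := by
    intro u _ hu
    rw [blockWeight_of_lt m l r (by rw [mem_range] at hu; omega), mul_zero]
  rw [← sum_subset (range_subset_range.mpr (by omega)) hvanish, sum_range_succ',
    Nat.choose_zero_right, Nat.cast_one, one_mul, add_zero, blockWeight, if_pos hj,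
    sum_attach (range (l - j)) fun u => ((m - j).choose (u + 1) : R) * blockWeight m l r (j + u + 1)]
  simp only [add_assoc, add_sub_cancel]

end BlockWeight

abbrev BlockDesign (m : ℕ) (β : ℕ → ℕ) := Σ T : Finset (Fin m), Fin (β #T)

namespace BlockDesign

variable {m : ℕ} {β : ℕ → ℕ}

def block (i : Fin m) : Finset (BlockDesign m β) := {x | i ∈ x.1}

theorem inf_block (S : Finset (Fin m)) :
    S.inf block = ({x | S ⊆ x.1} : Finset (BlockDesign m β)) := by
  ext x
  simp [block, mem_inf, subset_iff]

theorem card_filter_subset_fst (S : Finset (Fin m)) :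
    #{x : BlockDesign m β | S ⊆ x.1} =
      ∑ u ∈ range (m - #S + 1), (m - #S).choose u * β (#S + u) := by
  have hsupersets :
      ({T | S ⊆ T} : Finset (Finset (Fin m))) = (univ \ S).powerset.image (S ∪ ·) := by
    rw [← Icc_eq_image_powerset (subset_univ S)]
    ext T
    simp
  have hdisj : ∀ R ∈ (univ \ S).powerset, Disjoint S R := fun R hR =>
    disjoint_of_subset_right (mem_powerset.mp hR) disjoint_sdiff
  have hinj : Set.InjOn (S ∪ ·) ((univ \ S).powerset : Set (Finset (Fin m))) := by
    intro R hR R' hR' h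
    rw [← union_sdiff_cancel_left (hdisj R hR), ← union_sdiff_cancel_left (hdisj R' hR')]
    exact congrArg (· \ S) h
  calc #{x : BlockDesign m β | S ⊆ x.1}
      = ∑ T ∈ ({T | S ⊆ T} : Finset (Finset (Fin m))), β #T := by
        rw [card_filter, Fintype.sum_sigma, sum_filter]
        refine sum_congr rfl fun T _ => ?_
        split_ifs <;> simp
    _ = ∑ R ∈ (univ \ S).powerset, β (#S + #R) := by
        rw [hsupersets, sum_image hinj]
        exact sum_congr rfl fun R hR => by rw [card_union_of_disjoint (hdisj R hR)]
    _ = _ := by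
        rw [sum_powerset_apply_card (fun u => β (#S + u)), card_sdiff_of_subset (subset_univ S),
          card_univ, Fintype.card_fin]
        simp [mul_comm]

theorem natCast_card_inf_block {p : ℕ} [NeZero p] {γ : ℕ → ZMod p} (S : Finset (Fin m)) :
    (#(S.inf (block (β := fun t => (γ t).val))) : ZMod p) =
      ∑ u ∈ range (m - #S + 1), ((m - #S).choose u : ZMod p) * γ (#S + u) := by
  rw [inf_block, card_filter_subset_fst]
  push_cast [ZMod.natCast_zmod_val]
  rfl

theorem factorial_mul_card_le {l p b : ℕ} (hl : 0 < l) (hm : l ≤ m) (hβp : ∀ t, β t < p)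
    (hβl : ∀ t, l < t → β t = 0) (hb : β l ≤ b) :
    l.factorial * Fintype.card (BlockDesign m β) ≤
      b * m ^ l + p * l * l.factorial * m ^ (l - 1) := by
  have hcard : Fintype.card (BlockDesign m β) = ∑ u ∈ range (l + 1), m.choose u * β u := by
    have := card_filter_subset_fst (β := β) (∅ : Finset (Fin m))
    simp only [empty_subset, filter_true, card_univ, card_empty, Nat.sub_zero, zero_add] at this
    rw [this]
    refine (sum_subset (range_subset_range.mpr (by omega : l + 1 ≤ m + 1)) fun u _ hu => ?_).symm
    rw [hβl u (by rw [mem_range] at hu; omega), mul_zero]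
  have hlow : ∑ u ∈ range l, m.choose u * β u ≤ l * (m ^ (l - 1) * p) := by
    simpa using sum_le_card_nsmul (range l) _ _ fun u hu =>
      Nat.mul_le_mul ((Nat.choose_le_pow m u).trans
        (Nat.pow_le_pow_right (by omega) (by rw [mem_range] at hu; omega))) (hβp u).le
  have htop : l.factorial * m.choose l ≤ m ^ l := by
    rw [← Nat.descFactorial_eq_factorial_mul_choose]
    exact Nat.descFactorial_le_pow m l
  calc l.factorial * Fintype.card (BlockDesign m β)
      = l.factorial * ∑ u ∈ range l, m.choose u * β u + l.factorial * m.choose l * β l := by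
        rw [hcard, sum_range_succ]; ring
    _ ≤ l.factorial * (l * (m ^ (l - 1) * p)) + m ^ l * b :=
        add_le_add (Nat.mul_le_mul_left _ hlow) (Nat.mul_le_mul htop hb)
    _ = _ := by ring

theorem block_injective {l : ℕ} (hl : 0 < l) (hm : l < m) (hβ : 0 < β l) :
    Function.Injective (block : Fin m → Finset (BlockDesign m β)) := by
  intro i i' h
  by_contra hne
  obtain ⟨T, hiT, hTi', hT⟩ := exists_subsuperset_card_eq (s := {i}) (t := univ.erase i') (n := l)
    (by simpa using hne) (by simpa [Nat.one_le_iff_ne_zero] using hl.ne')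
    (by rw [card_erase_of_mem (mem_univ _), card_univ, Fintype.card_fin]; omega)
  have hx : (⟨T, ⟨0, hT ▸ hβ⟩⟩ : BlockDesign m β) ∈ block i := by simpa [block] using hiT
  rw [h] at hx
  exact absurd (hTi' (by simpa [block] using hx)) (by simp)

end BlockDesign

section Pattern

variable {p k : ℕ}

def MatchesEntry : Option (ZMod p) → ZMod p → Prop
  | some a, x => x = a
  | none, x => x ≠ 0

theorem MatchesEntry.ne_zero {a : Option (ZMod p)} {x : ZMod p} (h : MatchesEntry a x)
    (ha : a ≠ some 0) : x ≠ 0 := by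
  cases a with
  | none => exact h
  | some a => rintro rfl; exact ha (congrArg some (h.symm))

theorem matchesEntry_getD_one [Nontrivial (ZMod p)] (a : Option (ZMod p)) :
    MatchesEntry a (a.getD 1) := by
  cases a with
  | none => exact one_ne_zero
  | some a => rfl

theorem isIntersectingStar_iff {n : ℕ} {α : Fin k → Option (ZMod p)}
    {F : Finset (Finset (Fin n))} :
    IsIntersectingStar p k n α F ↔
      ∀ (j : Fin k) (S : Finset (Finset (Fin n))), S ⊆ F → #S = j.1 + 1 →
        MatchesEntry (α j) #(S.inf id) := by
  refine forall_congr' fun j => ?_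
  cases α j <;> rfl

def patternResidue (α : Fin k → Option (ZMod p)) (t : ℕ) : ZMod p :=
  if h : t - 1 < k then (α ⟨t - 1, h⟩).getD 1 else 0

theorem patternResidue_succ (α : Fin k → Option (ZMod p)) (j : Fin k) :
    patternResidue α (j + 1) = (α j).getD 1 := by
  simp [patternResidue]

variable (p k) in
theorem fMaxStar_set_bddAbove (n : ℕ) (α : Fin k → Option (ZMod p)) :
    BddAbove {m | ∃ F : Finset (Finset (Fin n)), IsIntersectingStar p k n α F ∧ #F = m} :=
  ⟨Fintype.card (Finset (Fin n)), by rintro m ⟨F, -, rfl⟩; exact card_le_univ F⟩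

theorem le_fMaxStar {n : ℕ} {α : Fin k → Option (ZMod p)} {F : Finset (Finset (Fin n))}
    (hF : IsIntersectingStar p k n α F) : #F ≤ fMaxStar p k n α :=
  le_csSup (fMaxStar_set_bddAbove p k n α) ⟨F, hF, rfl⟩

theorem exists_card_eq_fMaxStar (n : ℕ) (α : Fin k → Option (ZMod p)) :
    ∃ F : Finset (Finset (Fin n)), IsIntersectingStar p k n α F ∧ #F = fMaxStar p k n α := by
  refine Nat.sSup_mem ?_ (fMaxStar_set_bddAbove p k n α)
  refine ⟨0, ∅, fun j S hS hcard => ?_, card_empty⟩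
  simp [subset_empty.mp hS] at hcard

theorem le_fMaxStar_of_injective {Ω : Type*} [Fintype Ω] [DecidableEq Ω] {n m : ℕ}
    {α : Fin k → Option (ZMod p)} (G : Fin m → Finset Ω) (hG : Function.Injective G)
    (hn : Fintype.card Ω ≤ n)
    (hpat : ∀ (j : Fin k) (S : Finset (Fin m)), #S = j.1 + 1 → MatchesEntry (α j) #(S.inf G)) :
    m ≤ fMaxStar p k n α := by
  obtain ⟨e⟩ : Nonempty (Ω ↪ Fin n) := Function.Embedding.nonempty_of_card_le (by simpa)
  let E : Fin m ↪ Finset (Fin n) := ⟨fun i => (G i).map e, (map_injective e).comp hG⟩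
  have hF := le_fMaxStar (F := univ.map E) (α := α) <| isIntersectingStar_iff.mpr ?_
  · simpa using hF
  intro j S hS hcard
  obtain ⟨S', -, rfl⟩ := subset_map_iff.mp hS
  rw [card_map] at hcard
  have hS' : S'.Nonempty := card_pos.mp (by omega)
  have hinf : (S'.map E).inf id = (S'.inf G).map e :=
    calc (S'.map E).inf id = S'.inf' hS' fun i => (G i).map e := by rw [inf_map, inf'_eq_inf]; rfl
      _ = (S'.inf' hS' G).map e :=
        (apply_inf'_eq_inf'_comp hS' (fun s : Finset Ω => s.map e) fun _ _ => map_inter _ _).symm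
      _ = (S'.inf G).map e := by rw [inf'_eq_inf]
  rw [hinf, card_map]
  exact hpat j S' hcard

end Pattern

theorem natCast_le_rpow_add_of_choose_le {M n l : ℕ} (hl : 0 < l) (h : M.choose l ≤ n) :
    (M : ℝ) ≤ ((l.factorial : ℝ) * n) ^ (1 / (l : ℝ)) + l := by
  have hpow : (M + 1 - l) ^ l ≤ l.factorial * n :=
    calc (M + 1 - l) ^ l ≤ M.descFactorial l := Nat.pow_sub_le_descFactorial M l
      _ = l.factorial * M.choose l := Nat.descFactorial_eq_factorial_mul_choose M l
      _ ≤ l.factorial * n := Nat.mul_le_mul_left _ h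
  have hroot : ((M + 1 - l : ℕ) : ℝ) ≤ ((l.factorial : ℝ) * n) ^ (1 / (l : ℝ)) := by
    calc ((M + 1 - l : ℕ) : ℝ) = (((M + 1 - l : ℕ) : ℝ) ^ l) ^ (1 / (l : ℝ)) := by
          rw [one_div, Real.pow_rpow_inv_natCast (by positivity) hl.ne']
      _ ≤ _ := by gcongr; exact_mod_cast hpow
  have : M ≤ (M + 1 - l) + l := by omega
  have : (M : ℝ) ≤ ((M + 1 - l : ℕ) : ℝ) + l := by exact_mod_cast this
  linarith

theorem pow_add_mul_pow_pred_le_add_pow (a d : ℕ) {l : ℕ} (hl : 0 < l) :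
    a ^ l + d * a ^ (l - 1) ≤ (a + d) ^ l := by
  obtain ⟨l, rfl⟩ := Nat.exists_eq_add_of_lt hl
  simp only [zero_add, Nat.add_sub_cancel, pow_succ]
  calc a ^ l * a + d * a ^ l = a ^ l * (a + d) := by ring
    _ ≤ (a + d) ^ l * (a + d) := by gcongr; omega

theorem rpow_sub_le_of_pow_le {f : ℕ → ℕ} {l b c D : ℕ} (hl : 0 < l) (hb : 0 < b)
    (hf : ∀ m n, l < m → b * m ^ l + D * m ^ (l - 1) ≤ c * n → m ≤ f n) (n : ℕ) :
    ((c * n / b : ℝ)) ^ (1 / (l : ℝ)) - (D + l + 2) ≤ f n := by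
  set y : ℝ := ((c * n / b : ℝ)) ^ (1 / (l : ℝ))
  by_cases hy : y < D + l + 2
  · have : (0 : ℝ) ≤ f n := by positivity
    linarith
  rw [not_lt] at hy
  have hy0 : 0 ≤ y := by positivity
  have hfloor : D + l + 2 ≤ ⌊y⌋₊ := Nat.le_floor (by exact_mod_cast hy)
  set m := ⌊y⌋₊ - D
  have hmD : ((m + D : ℕ) : ℝ) ≤ y := by
    rw [show m + D = ⌊y⌋₊ by omega]; exact Nat.floor_le hy0
  have hyl : y ^ l = c * n / b := by
    simp only [y, one_div, Real.rpow_inv_natCast_pow (by positivity : (0 : ℝ) ≤ c * n / b) hl.ne']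
  have hpow : b * m ^ l + D * m ^ (l - 1) ≤ c * n := by
    have h1 : b * m ^ l + D * m ^ (l - 1) ≤ b * (m + D) ^ l :=
      calc b * m ^ l + D * m ^ (l - 1) ≤ b * (m ^ l + D * m ^ (l - 1)) := by
            nlinarith [Nat.zero_le (D * m ^ (l - 1))]
        _ ≤ b * (m + D) ^ l := Nat.mul_le_mul_left _ (pow_add_mul_pow_pred_le_add_pow m D hl)
    have h2 : ((b * (m + D) ^ l : ℕ) : ℝ) ≤ c * n := by
      push_cast
      calc (b : ℝ) * (m + D) ^ l ≤ b * y ^ l := by gcongr; exact_mod_cast hmD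
        _ = c * n := by rw [hyl]; field_simp
    exact h1.trans (by exact_mod_cast h2)
  have hmf : (m : ℝ) ≤ f n := by exact_mod_cast hf m n (by omega) hpow
  have : y - 1 < ⌊y⌋₊ := Nat.sub_one_lt_floor y
  have : (m : ℝ) = ⌊y⌋₊ - D := by rw [Nat.cast_sub (by omega)]
  linarith

theorem tendsto_div_nhds_one_of_abs_sub_le {ι : Type*} {L : Filter ι} {f x : ι → ℝ} {C : ℝ}
    (hx : Tendsto x L atTop) (hf : ∀ᶠ i in L, |f i - x i| ≤ C) :
    Tendsto (fun i => f i / x i) L (𝓝 1) := by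
  have hdiff : Tendsto (fun i => (f i - x i) / x i) L (𝓝 0) := by
    refine squeeze_zero_norm' ?_ ((tendsto_const_nhds (x := C)).div_atTop hx)
    filter_upwards [hf, hx.eventually_gt_atTop 0] with i hi hxi
    rw [norm_div, Real.norm_eq_abs, Real.norm_eq_abs, abs_of_pos hxi]
    gcongr
  have := hdiff.const_add 1
  rw [add_zero] at this
  refine this.congr' ?_
  filter_upwards [hx.eventually_gt_atTop 0] with i hxi
  field_simp
  ring

theorem exists_mul_rpow_bounds {g : ℕ → ℝ} {a a' C C' e : ℝ} (ha : 0 < a) (ha' : 0 < a')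
    (hC' : 0 ≤ C') (he : 0 < e)
    (hlow : ∀ n : ℕ, a * (n : ℝ) ^ e - C ≤ g n) (hup : ∀ n : ℕ, g n ≤ a' * (n : ℝ) ^ e + C') :
    ∃ c₁ c₂ : ℝ, 0 < c₁ ∧ 0 < c₂ ∧ ∀ᶠ n : ℕ in atTop,
      c₁ * (n : ℝ) ^ e ≤ g n ∧ g n ≤ c₂ * (n : ℝ) ^ e := by
  refine ⟨a / 2, a' + C', by positivity, by positivity, ?_⟩
  have hz : Tendsto (fun n : ℕ => (n : ℝ) ^ e) atTop atTop :=
    (tendsto_rpow_atTop he).comp tendsto_natCast_atTop_atTop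
  filter_upwards [hz.eventually_ge_atTop 1, hz.eventually_ge_atTop (2 * C / a)] with n h1 h2
  constructor
  · have := hlow n
    have : 2 * C ≤ a * (n : ℝ) ^ e := by rwa [div_le_iff₀' ha] at h2
    linarith
  · have := hup n
    nlinarith

section Bounds

variable {p k l : ℕ} [Fact p.Prime] {α : Fin k → Option (ZMod p)}

theorem choose_fMaxStar_le (hl : 0 < l) (hk : 2 * l ≤ k) (hne : α ⟨l - 1, by omega⟩ ≠ some 0)
    (h0 : ∀ i : Fin k, l ≤ i.1 → α i = some 0) (n : ℕ) :
    (fMaxStar p k n α).choose l ≤ n := by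
  obtain ⟨F, hF, hcard⟩ := exists_card_eq_fMaxStar n α
  rw [isIntersectingStar_iff] at hF
  have := choose_card_le_of_inf_card (K := ZMod p) F l
    (fun S hS hSl => (hF ⟨l - 1, by omega⟩ S hS (by dsimp only; omega)).ne_zero hne)
    (fun S hS hlS hS2l => by
      have := hF ⟨#S - 1, by omega⟩ S hS (by dsimp only; omega)
      rwa [h0 _ (by dsimp only; omega)] at this)
  simpa [hcard] using this

theorem le_fMaxStar_of_pow_le (hl : 0 < l) (hk : l ≤ k) (hne : α ⟨l - 1, by omega⟩ ≠ some 0)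
    (h0 : ∀ i : Fin k, l ≤ i.1 → α i = some 0) {m n b : ℕ} (hm : l < m)
    (hb : ((α ⟨l - 1, by omega⟩).getD 1).val ≤ b)
    (hn : b * m ^ l + p * l * l.factorial * m ^ (l - 1) ≤ l.factorial * n) :
    m ≤ fMaxStar p k n α := by
  set γ := blockWeight m l (patternResidue α)
  set β : ℕ → ℕ := fun t => (γ t).val
  have hβl : β l = ((α ⟨l - 1, by omega⟩).getD 1).val := by
    have := patternResidue_succ α ⟨l - 1, by omega⟩
    simp only [Nat.sub_add_cancel hl] at this
    simp only [β, γ, blockWeight_self, this]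
  have hβpos : 0 < β l := by
    rw [hβl, ZMod.val_pos]
    exact (matchesEntry_getD_one _).ne_zero hne
  refine le_fMaxStar_of_injective (BlockDesign.block (β := β))
    (BlockDesign.block_injective hl hm hβpos) ?_ fun j S hS => ?_
  · have := BlockDesign.factorial_mul_card_le (m := m) (β := β) hl hm.le (fun t => ZMod.val_lt _)
      (fun t ht => by simp [β, γ, blockWeight_of_lt _ _ _ ht]) (hβl ▸ hb)
    exact Nat.le_of_mul_le_mul_left (this.trans hn) (Nat.factorial_pos l)
  rw [BlockDesign.natCast_card_inf_block]
  by_cases hjl : j.1 + 1 ≤ l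
  · rw [hS, sum_choose_mul_blockWeight _ _ _ hjl (by omega), patternResidue_succ]
    exact matchesEntry_getD_one _
  · rw [h0 j (by omega)]
    exact sum_eq_zero fun u _ => by
      rw [show γ (#S + u) = 0 from blockWeight_of_lt _ _ _ (by omega), mul_zero]

theorem fMaxStar_le_rpow_add (hl : 0 < l) (hk : 2 * l ≤ k) (hne : α ⟨l - 1, by omega⟩ ≠ some 0)
    (h0 : ∀ i : Fin k, l ≤ i.1 → α i = some 0) (n : ℕ) :
    (fMaxStar p k n α : ℝ) ≤ ((l.factorial : ℝ) * n) ^ (1 / (l : ℝ)) + l :=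
  natCast_le_rpow_add_of_choose_le hl (choose_fMaxStar_le hl hk hne h0 n)

theorem rpow_sub_le_fMaxStar (hl : 0 < l) (hk : l ≤ k) (hne : α ⟨l - 1, by omega⟩ ≠ some 0)
    (h0 : ∀ i : Fin k, l ≤ i.1 → α i = some 0) {b : ℕ} (hb : 0 < b)
    (hαb : ((α ⟨l - 1, by omega⟩).getD 1).val ≤ b) (n : ℕ) :
    ((l.factorial * n / b : ℝ)) ^ (1 / (l : ℝ)) - ((p * l * l.factorial : ℕ) + l + 2) ≤
      fMaxStar p k n α :=
  rpow_sub_le_of_pow_le hl hb (fun _ _ hm hn => le_fMaxStar_of_pow_le hl hk hne h0 hm hαb hn) n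

theorem abs_fMaxStar_sub_rpow_le (hl : 0 < l) (hk : 2 * l ≤ k)
    (hne : α ⟨l - 1, by omega⟩ ≠ some 0) (h0 : ∀ i : Fin k, l ≤ i.1 → α i = some 0)
    (hα : α ⟨l - 1, by omega⟩ = some 1 ∨ α ⟨l - 1, by omega⟩ = none) (n : ℕ) :
    |(fMaxStar p k n α : ℝ) - ((l.factorial : ℝ) * n) ^ (1 / (l : ℝ))| ≤
      (p * l * l.factorial : ℕ) + l + 2 := by
  have hα1 : ((α ⟨l - 1, by omega⟩).getD 1).val ≤ 1 := by
    rcases hα with h | h <;> simp [h, ZMod.val_one]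
  have hlow := rpow_sub_le_fMaxStar hl (by omega) hne h0 one_pos hα1 n
  have hup := fMaxStar_le_rpow_add hl hk hne h0 n
  have : (0 : ℝ) ≤ (p * l * l.factorial : ℕ) := Nat.cast_nonneg _
  rw [Nat.cast_one, div_one] at hlow
  rw [abs_le]
  constructor <;> linarith

end Bounds

theorem stmt19 (p : ℕ) (hp : p.Prime) (l k : ℕ) (hl : 1 ≤ l) (hk : 2 * l ≤ k)
    (α : Fin k → Option (ZMod p))
    (hne : α ⟨l - 1, by omega⟩ ≠ some 0)
    (h0 : ∀ i : Fin k, l ≤ i.1 → α i = some 0) :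
    (∃ c₁ c₂ : ℝ, 0 < c₁ ∧ 0 < c₂ ∧ ∀ᶠ n : ℕ in atTop,
      c₁ * (n : ℝ) ^ ((1 : ℝ) / (l : ℝ)) ≤ (fMaxStar p k n α : ℝ) ∧
      (fMaxStar p k n α : ℝ) ≤ c₂ * (n : ℝ) ^ ((1 : ℝ) / (l : ℝ))) ∧
    ((α ⟨l - 1, by omega⟩ = some 1 ∨ α ⟨l - 1, by omega⟩ = none) →
      Tendsto (fun n : ℕ => (fMaxStar p k n α : ℝ) /
        (((l.factorial : ℝ) * (n : ℝ)) ^ ((1 : ℝ) / (l : ℝ)))) atTop (nhds 1)) := by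
  have := Fact.mk hp
  have hl' : (0 : ℝ) < l := by exact_mod_cast hl
  have hp' : (0 : ℝ) < p := by exact_mod_cast hp.pos
  refine ⟨exists_mul_rpow_bounds (a := ((l.factorial : ℝ) / p) ^ (1 / (l : ℝ)))
    (a' := (l.factorial : ℝ) ^ (1 / (l : ℝ))) (C := (p * l * l.factorial : ℕ) + l + 2)
    (by positivity) (by positivity) (Nat.cast_nonneg l) (by positivity) (fun n => ?_)
    (fun n => ?_), fun hα => ?_⟩
  · have := rpow_sub_le_fMaxStar hl (by omega) hne h0 hp.pos (ZMod.val_lt _).le n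
    rwa [mul_div_right_comm, Real.mul_rpow (by positivity) (by positivity)] at this
  · simpa only [Real.mul_rpow (by positivity : (0 : ℝ) ≤ l.factorial) (Nat.cast_nonneg n)]
      using fMaxStar_le_rpow_add hl hk hne h0 n
  · exact tendsto_div_nhds_one_of_abs_sub_le ((tendsto_rpow_atTop (by positivity)).comp
      (tendsto_natCast_atTop_atTop.const_mul_atTop (by positivity)))
      (Eventually.of_forall (abs_fMaxStar_sub_rpow_le hl hk hne h0 hα))
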